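/- arXiv:1904.04134 — 6 statements merged into one kernel-verified Lean document; each statement's English description precedes it below -/
import Mathlib

section
/- In the doubly twisted product of weighted graphs G₁ and G₂ with twisting functions α, β: G₁ × G₂ → ℝ_+, the Laplacian splits: for any u: G₁ × G₂ → ℝ and vertices x ∈ G₁, p ∈ G₂, one has Δu(x,p) = α(x,p)⁻²·Δ^{G₁}u(·,p)(x) + β(x,p)⁻²·Δ^{G₂}u(x,·)(p). -/
open Finset

noncomputable def glap {V : Type*} [Fintype V] (Adj : V → V → Prop) [DecidableRel Adj]
    (ω : V → V → ℝ) (m : V → ℝ) (f : V → ℝ) (z : V) : ℝ :=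
  (m z)⁻¹ * ∑ w ∈ Finset.univ.filter (fun w => Adj z w), (f w - f z) * ω z w

noncomputable def gdeg {V : Type*} [Fintype V] (Adj : V → V → Prop) [DecidableRel Adj]
    (ω : V → V → ℝ) (m : V → ℝ) (z : V) : ℝ :=
  (m z)⁻¹ * ∑ w ∈ Finset.univ.filter (fun w => Adj z w), ω z w

noncomputable def ggamma {V : Type*} [Fintype V] (Adj : V → V → Prop) [DecidableRel Adj]
    (ω : V → V → ℝ) (m : V → ℝ) (f g : V → ℝ) (z : V) : ℝ :=
  (2 * m z)⁻¹ * ∑ w ∈ Finset.univ.filter (fun w => Adj z w), (f w - f z) * (g w - g z) * ω z w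

noncomputable def ggamma2 {V : Type*} [Fintype V] (Adj : V → V → Prop) [DecidableRel Adj]
    (ω : V → V → ℝ) (m : V → ℝ) (f : V → ℝ) (z : V) : ℝ :=
  (1/2) * (glap Adj ω m (fun w => ggamma Adj ω m f f w) z
    - 2 * ggamma Adj ω m f (glap Adj ω m f) z)

/-- The optimal Bakry–Émery curvature constant `K_{G,x}(N)`. -/
noncomputable def curv {V : Type*} [Fintype V] (Adj : V → V → Prop) [DecidableRel Adj]
    (ω : V → V → ℝ) (m : V → ℝ) (x : V) (N : ℝ) : ℝ :=
  sSup {K : ℝ | ∀ f : V → ℝ,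
    ggamma2 Adj ω m f x ≥ N⁻¹ * (glap Adj ω m f x)^2 + K * ggamma Adj ω m f f x}

/-- Adjacency of the Cartesian product of two graphs. -/
def pAdj {V₁ V₂ : Type*} (A1 : V₁ → V₁ → Prop) (A2 : V₂ → V₂ → Prop) :
    V₁ × V₂ → V₁ × V₂ → Prop :=
  fun z w => (z.1 = w.1 ∧ A2 z.2 w.2) ∨ (z.2 = w.2 ∧ A1 z.1 w.1)

instance pAdjDec {V₁ V₂ : Type*} [DecidableEq V₁] [DecidableEq V₂]
    {A1 : V₁ → V₁ → Prop} {A2 : V₂ → V₂ → Prop} [DecidableRel A1] [DecidableRel A2] :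
    DecidableRel (pAdj A1 A2) := fun _ _ => by unfold pAdj; infer_instance

/-- Edge weights of the doubly twisted product of weighted graphs. -/
noncomputable def pW {V₁ V₂ : Type*} [DecidableEq V₁] [DecidableEq V₂]
    (m1 : V₁ → ℝ) (m2 : V₂ → ℝ) (ω1 : V₁ → V₁ → ℝ) (ω2 : V₂ → V₂ → ℝ)
    (α β : V₁ → V₂ → ℝ) : V₁ × V₂ → V₁ × V₂ → ℝ :=
  fun z w => (if z.2 = w.2 then m2 z.2 * (α z.1 z.2 ^ 2)⁻¹ * ω1 z.1 w.1 else 0)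
    + (if z.1 = w.1 then m1 z.1 * (β z.1 z.2 ^ 2)⁻¹ * ω2 z.2 w.2 else 0)

/-- Vertex measure of the product. -/
noncomputable def pM {V₁ V₂ : Type*} (m1 : V₁ → ℝ) (m2 : V₂ → ℝ) : V₁ × V₂ → ℝ :=
  fun z => m1 z.1 * m2 z.2

theorem stmt4 {V₁ V₂ : Type*} [Fintype V₁] [Fintype V₂] [DecidableEq V₁] [DecidableEq V₂]
    (A1 : V₁ → V₁ → Prop) [DecidableRel A1] (A2 : V₂ → V₂ → Prop) [DecidableRel A2]
    (ω1 : V₁ → V₁ → ℝ) (m1 : V₁ → ℝ) (ω2 : V₂ → V₂ → ℝ) (m2 : V₂ → ℝ)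
    (α β : V₁ → V₂ → ℝ)
    (hloop1 : ∀ y, ¬ A1 y y) (hloop2 : ∀ q, ¬ A2 q q)
    (hm1 : ∀ y, 0 < m1 y) (hm2 : ∀ q, 0 < m2 q)
    (hα : ∀ y q, 0 < α y q) (hβ : ∀ y q, 0 < β y q)
    (u : V₁ × V₂ → ℝ) (x : V₁) (p : V₂) :
    glap (pAdj A1 A2) (pW m1 m2 ω1 ω2 α β) (pM m1 m2) u (x, p)
      = (α x p ^ 2)⁻¹ * glap A1 ω1 m1 (fun y => u (y, p)) x
        + (β x p ^ 2)⁻¹ * glap A2 ω2 m2 (fun q => u (x, q)) p := by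
  classical
  have key : ∀ z : V₁ × V₂,
      (if pAdj A1 A2 (x, p) z then (u z - u (x, p)) * pW m1 m2 ω1 ω2 α β (x, p) z else 0)
      = (if A1 x z.1 then (if p = z.2 then
            (u z - u (x, p)) * (m2 p * (α x p ^ 2)⁻¹ * ω1 x z.1) else 0) else 0)
        + (if A2 p z.2 then (if x = z.1 then
            (u z - u (x, p)) * (m1 x * (β x p ^ 2)⁻¹ * ω2 p z.2) else 0) else 0) := by
    rintro ⟨y, q⟩
    simp only [pAdj, pW]
    by_cases hxy : x = y <;> by_cases hpq : p = q
    · subst hxy; subst hpq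
      simp [hloop1, hloop2]
    · subst hxy
      by_cases hA : A2 p q <;> simp [hpq, hA]
    · subst hpq
      by_cases hA : A1 x y <;> simp [hxy, hA]
    · have hc : ¬((x = y ∧ A2 p q) ∨ (p = q ∧ A1 x y)) := by
        rintro (⟨h, _⟩ | ⟨h, _⟩)
        exacts [hxy h, hpq h]
      simp [hxy, hpq, hc]
  unfold glap
  rw [Finset.sum_filter, Finset.sum_filter, Finset.sum_filter]
  rw [Finset.sum_congr rfl (fun z _ => key z), Finset.sum_add_distrib,
    Fintype.sum_prod_type, Fintype.sum_prod_type]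
  have h1 : ∀ y : V₁, (∑ q : V₂, if A1 x (y, q).1 then (if p = (y, q).2 then
        (u (y, q) - u (x, p)) * (m2 p * (α x p ^ 2)⁻¹ * ω1 x (y, q).1) else 0) else 0)
      = m2 p * (α x p ^ 2)⁻¹ *
        (if A1 x y then (u (y, p) - u (x, p)) * ω1 x y else 0) := by
    intro y
    by_cases hA : A1 x y
    · simp only [hA, if_true]
      rw [Finset.sum_ite_eq Finset.univ p (fun q => (u (y, q) - u (x, p)) * (m2 p * (α x p ^ 2)⁻¹ * ω1 x y))]
      simp; ring
    · simp [hA]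
  have h2 : (∑ y : V₁, ∑ q : V₂, if A2 p (y, q).2 then (if x = (y, q).1 then
        (u (y, q) - u (x, p)) * (m1 x * (β x p ^ 2)⁻¹ * ω2 p (y, q).2) else 0) else 0)
      = m1 x * (β x p ^ 2)⁻¹ *
        ∑ q : V₂, (if A2 p q then (u (x, q) - u (x, p)) * ω2 p q else 0) := by
    rw [Finset.sum_comm]
    rw [Finset.mul_sum]
    refine Finset.sum_congr rfl fun q _ => ?_
    by_cases hA : A2 p q
    · simp only [hA, if_true]
      rw [Finset.sum_ite_eq Finset.univ x (fun y => (u (y, q) - u (x, p)) * (m1 x * (β x p ^ 2)⁻¹ * ω2 p q))]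
      simp; ring
    · simp [hA]
  rw [Finset.sum_congr rfl (fun y _ => h1 y), h2, ← Finset.mul_sum]
  simp only [pM]
  have hα' := (hα x p).ne'
  have hβ' := (hβ x p).ne'
  have hm1' := (hm1 x).ne'
  have hm2' := (hm2 p).ne'
  field_simp
end

section
/- In the doubly twisted product of weighted graphs G₁ and G₂, the square field operator splits: for functions u, v: G₁ × G₂ → ℝ and vertices x ∈ G₁, p ∈ G₂, Γ(u,v)(x,p) = α(x,p)⁻²·Γ^{G₁}(u(·,p), v(·,p))(x) + β(x,p)⁻²·Γ^{G₂}(u(x,·), v(x,·))(p). -/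
open Finset

lemma aux_split (a b A B S T : ℝ) (ha : a ≠ 0) (hb : b ≠ 0) :
    (2 * (a * b))⁻¹ * (b * A * S + a * B * T)
      = A * ((2 * a)⁻¹ * S) + B * ((2 * b)⁻¹ * T) := by
  field_simp

theorem stmt5 {V₁ V₂ : Type*} [Fintype V₁] [Fintype V₂] [DecidableEq V₁] [DecidableEq V₂]
    (A1 : V₁ → V₁ → Prop) [DecidableRel A1] (A2 : V₂ → V₂ → Prop) [DecidableRel A2]
    (ω1 : V₁ → V₁ → ℝ) (m1 : V₁ → ℝ) (ω2 : V₂ → V₂ → ℝ) (m2 : V₂ → ℝ)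
    (α β : V₁ → V₂ → ℝ)
    (hloop1 : ∀ y, ¬ A1 y y) (hloop2 : ∀ q, ¬ A2 q q)
    (hm1 : ∀ y, 0 < m1 y) (hm2 : ∀ q, 0 < m2 q)
    (hα : ∀ y q, 0 < α y q) (hβ : ∀ y q, 0 < β y q)
    (u v : V₁ × V₂ → ℝ) (x : V₁) (p : V₂) :
    ggamma (pAdj A1 A2) (pW m1 m2 ω1 ω2 α β) (pM m1 m2) u v (x, p)
      = (α x p ^ 2)⁻¹ * ggamma A1 ω1 m1 (fun y => u (y, p)) (fun y => v (y, p)) x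
        + (β x p ^ 2)⁻¹ * ggamma A2 ω2 m2 (fun q => u (x, q)) (fun q => v (x, q)) p := by
  have hm1x := (hm1 x).ne'
  have hm2p := (hm2 p).ne'
  unfold ggamma
  have key : ∑ w ∈ Finset.univ.filter (fun w => pAdj A1 A2 (x,p) w),
      (u w - u (x,p)) * (v w - v (x,p)) * pW m1 m2 ω1 ω2 α β (x,p) w
    = m2 p * (α x p ^ 2)⁻¹ * ∑ y ∈ Finset.univ.filter (fun y => A1 x y),
        (u (y,p) - u (x,p)) * (v (y,p) - v (x,p)) * ω1 x y
      + m1 x * (β x p ^ 2)⁻¹ * ∑ q ∈ Finset.univ.filter (fun q => A2 p q),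
        (u (x,q) - u (x,p)) * (v (x,q) - v (x,p)) * ω2 p q := by
    rw [Finset.sum_filter, Fintype.sum_prod_type]
    have h1 : ∀ y q, (if pAdj A1 A2 (x,p) (y,q) then
        (u (y,q) - u (x,p)) * (v (y,q) - v (x,p)) * pW m1 m2 ω1 ω2 α β (x,p) (y,q) else 0)
      = (if p = q then (if A1 x y then
            (u (y,p) - u (x,p)) * (v (y,p) - v (x,p)) * (m2 p * (α x p ^ 2)⁻¹ * ω1 x y)
            else 0) else 0)
        + (if x = y then (if A2 p q then
            (u (x,q) - u (x,p)) * (v (x,q) - v (x,p)) * (m1 x * (β x p ^ 2)⁻¹ * ω2 p q)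
            else 0) else 0) := by
      intro y q
      by_cases hpq : p = q <;> by_cases hxy : x = y
      · subst hpq; subst hxy
        simp [pAdj, pW, hloop1, hloop2]
      · subst hpq
        simp only [pAdj, pW, hxy, if_true, if_neg hxy]
        by_cases hA : A1 x y
        · simp [hA, hloop2 p, hxy]
        · simp [hA, hloop2 p, hxy]
      · subst hxy
        simp only [pAdj, pW, hpq, if_neg hpq]
        by_cases hA : A2 p q
        · simp [hA, hloop1 x, hpq]
        · simp [hA, hloop1 x, hpq]
      · have : ¬ pAdj A1 A2 (x,p) (y,q) := by
          simp [pAdj, hpq, hxy]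
        simp [this, hpq, hxy]
    simp only [h1, Finset.sum_add_distrib]
    congr 1
    · rw [Finset.sum_comm]
      rw [Finset.sum_eq_single p (fun b _ hb => Finset.sum_eq_zero
        (fun y _ => by simp [Ne.symm hb])) (by simp)]
      simp only [if_true]
      rw [Finset.mul_sum, Finset.sum_filter]
      refine Finset.sum_congr rfl fun y _ => ?_
      by_cases hA : A1 x y <;> simp [hA] <;> ring
    · rw [Finset.sum_eq_single x (fun b _ hb => Finset.sum_eq_zero
        (fun q _ => by simp [Ne.symm hb])) (by simp)]
      simp only [if_true]
      rw [Finset.mul_sum, Finset.sum_filter]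
      refine Finset.sum_congr rfl fun q _ => ?_
      by_cases hA : A2 p q <;> simp [hA] <;> ring
  rw [key]
  show (2 * (m1 x * m2 p))⁻¹ * _ = _
  rw [aux_split _ _ _ _ _ _ hm1x hm2p]
end

section
/- In the doubly twisted product graph, for product/sum functions one has: Δ(u₁⊗u₂)(x,p) = u₂(p)·α⁻²·Δ^{G₁}u₁(x) + u₁(x)·β⁻²·Δ^{G₂}u₂(p), and Δ(u₁⊕u₂)(x,p) = α⁻²·Δ^{G₁}u₁(x) + β⁻²·Δ^{G₂}u₂(p), where (u₁⊗u₂)(x,p) = u₁(x)u₂(p) and (u₁⊕u₂)(x,p) = u₁(x) + u₂(p). -/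
open Finset

lemma glap_prod_key {V₁ V₂ : Type*} [Fintype V₁] [Fintype V₂] [DecidableEq V₁] [DecidableEq V₂]
    (A1 : V₁ → V₁ → Prop) [DecidableRel A1] (A2 : V₂ → V₂ → Prop) [DecidableRel A2]
    (ω1 : V₁ → V₁ → ℝ) (m1 : V₁ → ℝ) (ω2 : V₂ → V₂ → ℝ) (m2 : V₂ → ℝ)
    (α β : V₁ → V₂ → ℝ)
    (hloop1 : ∀ y, ¬ A1 y y) (hloop2 : ∀ q, ¬ A2 q q)
    (hm1 : ∀ y, 0 < m1 y) (hm2 : ∀ q, 0 < m2 q)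
    (f : V₁ × V₂ → ℝ) (x : V₁) (p : V₂) :
    glap (pAdj A1 A2) (pW m1 m2 ω1 ω2 α β) (pM m1 m2) f (x, p)
      = (α x p ^ 2)⁻¹ * glap A1 ω1 m1 (fun y => f (y, p)) x
        + (β x p ^ 2)⁻¹ * glap A2 ω2 m2 (fun q => f (x, q)) p := by
  unfold glap pM
  rw [Finset.sum_filter, Finset.sum_filter, Finset.sum_filter, Fintype.sum_prod_type]
  have key : ∀ (y : V₁) (q : V₂),
      (if pAdj A1 A2 (x, p) (y, q) then
        (f (y, q) - f (x, p)) * pW m1 m2 ω1 ω2 α β (x, p) (y, q) else 0)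
      = (if q = p then (if A1 x y then (f (y, p) - f (x, p)) * (m2 p * (α x p ^ 2)⁻¹ * ω1 x y) else 0) else 0)
      + (if y = x then (if A2 p q then (f (x, q) - f (x, p)) * (m1 x * (β x p ^ 2)⁻¹ * ω2 p q) else 0) else 0) := by
    intro y q
    by_cases hq : q = p <;> by_cases hy : y = x
    · rw [hq, hy]
      simp [pAdj, pW, hloop1 x, hloop2 p]
    · rw [hq]
      have hxy : ¬ x = y := fun h => hy h.symm
      simp [pAdj, pW, hloop2 p, hy, hxy]
    · rw [hy]
      have hpq : ¬ p = q := fun h => hq h.symm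
      simp [pAdj, pW, hloop1 x, hq, hpq]
    · have hxy : ¬ x = y := fun h => hy h.symm
      have hpq : ¬ p = q := fun h => hq h.symm
      simp [pAdj, pW, hq, hy, hxy, hpq]
  rw [Finset.sum_congr rfl (fun y _ => Finset.sum_congr rfl (fun q _ => key y q))]
  simp only [Finset.sum_add_distrib]
  rw [Finset.sum_comm (f := fun y q => if y = x then (if A2 p q then (f (x, q) - f (x, p)) * (m1 x * (β x p ^ 2)⁻¹ * ω2 p q) else 0) else 0)]
  simp only [Finset.sum_ite_eq', Finset.mem_univ, if_true]
  have e1 : (∑ y : V₁, if A1 x y then (f (y, p) - f (x, p)) * (m2 p * (α x p ^ 2)⁻¹ * ω1 x y) else 0)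
      = m2 p * (α x p ^ 2)⁻¹ * ∑ y : V₁, if A1 x y then (f (y, p) - f (x, p)) * ω1 x y else 0 := by
    rw [Finset.mul_sum]
    refine Finset.sum_congr rfl fun y _ => ?_
    by_cases h : A1 x y <;> simp [h] <;> ring
  have e2 : (∑ q : V₂, if A2 p q then (f (x, q) - f (x, p)) * (m1 x * (β x p ^ 2)⁻¹ * ω2 p q) else 0)
      = m1 x * (β x p ^ 2)⁻¹ * ∑ q : V₂, if A2 p q then (f (x, q) - f (x, p)) * ω2 p q else 0 := by
    rw [Finset.mul_sum]
    refine Finset.sum_congr rfl fun q _ => ?_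
    by_cases h : A2 p q <;> simp [h] <;> ring
  rw [e1, e2]
  have hm1x := (hm1 x).ne'
  have hm2p := (hm2 p).ne'
  set S1 := ∑ y : V₁, if A1 x y then (f (y, p) - f (x, p)) * ω1 x y else 0 with hS1
  set S2 := ∑ q : V₂, if A2 p q then (f (x, q) - f (x, p)) * ω2 p q else 0 with hS2
  rw [mul_inv]
  have c1 : (m1 x)⁻¹ * m1 x = 1 := inv_mul_cancel₀ hm1x
  have c2 : (m2 p)⁻¹ * m2 p = 1 := inv_mul_cancel₀ hm2p
  calc (m1 x)⁻¹ * (m2 p)⁻¹ * (m2 p * (α x p ^ 2)⁻¹ * S1 + m1 x * (β x p ^ 2)⁻¹ * S2)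
      = ((m2 p)⁻¹ * m2 p) * ((α x p ^ 2)⁻¹ * ((m1 x)⁻¹ * S1))
        + ((m1 x)⁻¹ * m1 x) * ((β x p ^ 2)⁻¹ * ((m2 p)⁻¹ * S2)) := by ring
    _ = (α x p ^ 2)⁻¹ * ((m1 x)⁻¹ * S1) + (β x p ^ 2)⁻¹ * ((m2 p)⁻¹ * S2) := by
        rw [c1, c2]; ring

theorem stmt6 {V₁ V₂ : Type*} [Fintype V₁] [Fintype V₂] [DecidableEq V₁] [DecidableEq V₂]
    (A1 : V₁ → V₁ → Prop) [DecidableRel A1] (A2 : V₂ → V₂ → Prop) [DecidableRel A2]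
    (ω1 : V₁ → V₁ → ℝ) (m1 : V₁ → ℝ) (ω2 : V₂ → V₂ → ℝ) (m2 : V₂ → ℝ)
    (α β : V₁ → V₂ → ℝ)
    (hloop1 : ∀ y, ¬ A1 y y) (hloop2 : ∀ q, ¬ A2 q q)
    (hm1 : ∀ y, 0 < m1 y) (hm2 : ∀ q, 0 < m2 q)
    (hα : ∀ y q, 0 < α y q) (hβ : ∀ y q, 0 < β y q)
    (u1 : V₁ → ℝ) (u2 : V₂ → ℝ) (x : V₁) (p : V₂) :
    (glap (pAdj A1 A2) (pW m1 m2 ω1 ω2 α β) (pM m1 m2) (fun z => u1 z.1 * u2 z.2) (x, p)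
      = u2 p * (α x p ^ 2)⁻¹ * glap A1 ω1 m1 u1 x
        + u1 x * (β x p ^ 2)⁻¹ * glap A2 ω2 m2 u2 p)
    ∧ (glap (pAdj A1 A2) (pW m1 m2 ω1 ω2 α β) (pM m1 m2) (fun z => u1 z.1 + u2 z.2) (x, p)
      = (α x p ^ 2)⁻¹ * glap A1 ω1 m1 u1 x
        + (β x p ^ 2)⁻¹ * glap A2 ω2 m2 u2 p) := by
  constructor
  · rw [glap_prod_key A1 A2 ω1 m1 ω2 m2 α β hloop1 hloop2 hm1 hm2]
    have h1 : glap A1 ω1 m1 (fun y => u1 y * u2 p) x = u2 p * glap A1 ω1 m1 u1 x := by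
      unfold glap
      conv_rhs => rw [mul_left_comm, Finset.mul_sum]
      congr 1
      refine Finset.sum_congr rfl fun y _ => ?_
      ring
    have h2 : glap A2 ω2 m2 (fun q => u1 x * u2 q) p = u1 x * glap A2 ω2 m2 u2 p := by
      unfold glap
      conv_rhs => rw [mul_left_comm, Finset.mul_sum]
      congr 1
      refine Finset.sum_congr rfl fun q _ => ?_
      ring
    rw [h1, h2]; ring
  · rw [glap_prod_key A1 A2 ω1 m1 ω2 m2 α β hloop1 hloop2 hm1 hm2]
    have h1 : glap A1 ω1 m1 (fun y => u1 y + u2 p) x = glap A1 ω1 m1 u1 x := by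
      unfold glap; congr 1; refine Finset.sum_congr rfl fun y _ => ?_; ring
    have h2 : glap A2 ω2 m2 (fun q => u1 x + u2 q) p = glap A2 ω2 m2 u2 p := by
      unfold glap; congr 1; refine Finset.sum_congr rfl fun q _ => ?_; ring
    rw [h1, h2]
end

section
/- For every vertex x of a weighted graph G and every 0 < N ≤ 2, the optimal Bakry–Émery curvature satisfies K_{G,x}(N) ≥ K_{G,x}(2) − ((2−N)/N)·Deg(x). -/
open Finset

section aux

variable {V : Type*} [Fintype V] (Adj : V → V → Prop) [DecidableRel Adj]
    (ω : V → V → ℝ) (m : V → ℝ) (x : V)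
    (hm : ∀ z, 0 < m z) (hω : ∀ z w, Adj z w → 0 < ω z w)

include hm hω in
lemma gdeg_nonneg : 0 ≤ gdeg Adj ω m x := by
  unfold gdeg
  apply mul_nonneg (inv_nonneg.2 (hm x).le)
  apply Finset.sum_nonneg
  intro w hw
  exact (hω x w (by simpa using hw)).le

include hm hω in
lemma ggamma_nonneg (f : V → ℝ) : 0 ≤ ggamma Adj ω m f f x := by
  unfold ggamma
  have hmx := hm x
  apply mul_nonneg (by positivity)
  apply Finset.sum_nonneg
  intro w hw
  have := (hω x w (by simpa using hw)).le
  nlinarith [sq_nonneg (f w - f x)]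

include hm hω in
lemma key_cs (f : V → ℝ) :
    (glap Adj ω m f x)^2 ≤ 2 * gdeg Adj ω m x * ggamma Adj ω m f f x := by
  unfold glap gdeg ggamma
  set s := Finset.univ.filter (fun w => Adj x w) with hs
  have hCS : (∑ w ∈ s, (f w - f x) * ω x w)^2 ≤
      (∑ w ∈ s, ω x w) * (∑ w ∈ s, (f w - f x) * (f w - f x) * ω x w) := by
    apply Finset.sum_sq_le_sum_mul_sum_of_sq_eq_mul s
    · intro w hw; exact (hω x w (by simp [hs] at hw; exact hw)).le
    · intro w hw
      have := (hω x w (by simp [hs] at hw; exact hw)).le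
      nlinarith [sq_nonneg (f w - f x)]
    · intro w hw; ring
  have hmx := hm x
  have h2 : (2 * m x)⁻¹ = (m x)⁻¹ * 2⁻¹ := by
    rw [mul_inv, mul_comm]
  rw [h2]
  have hmi : (0:ℝ) ≤ (m x)⁻¹ := by positivity
  calc ((m x)⁻¹ * ∑ w ∈ s, (f w - f x) * ω x w)^2
      = (m x)⁻¹^2 * (∑ w ∈ s, (f w - f x) * ω x w)^2 := by ring
    _ ≤ (m x)⁻¹^2 * ((∑ w ∈ s, ω x w) * (∑ w ∈ s, (f w - f x) * (f w - f x) * ω x w)) := by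
        apply mul_le_mul_of_nonneg_left hCS (by positivity)
    _ = 2 * ((m x)⁻¹ * ∑ w ∈ s, ω x w) *
        ((m x)⁻¹ * 2⁻¹ * ∑ w ∈ s, (f w - f x) * (f w - f x) * ω x w) := by ring

end aux

theorem stmt9 {V : Type*} [Fintype V] (Adj : V → V → Prop) [DecidableRel Adj]
    (ω : V → V → ℝ) (m : V → ℝ) (x : V) (N : ℝ) (hN : 0 < N) (hN2 : N ≤ 2)
    (hm : ∀ z, 0 < m z) (hω : ∀ z w, Adj z w → 0 < ω z w) :
    curv Adj ω m x N ≥ curv Adj ω m x 2 - ((2 - N) / N) * gdeg Adj ω m x := by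
  set S : ℝ → Set ℝ := fun M => {K : ℝ | ∀ f : V → ℝ,
    ggamma2 Adj ω m f x ≥ M⁻¹ * (glap Adj ω m f x)^2 + K * ggamma Adj ω m f f x} with hS
  set c : ℝ := ((2 - N) / N) * gdeg Adj ω m x with hc
  have hcv : ∀ M, curv Adj ω m x M = sSup (S M) := fun M => rfl
  rw [hcv, hcv]
  have hdeg := gdeg_nonneg Adj ω m x hm hω
  have hc0 : 0 ≤ c := by
    apply mul_nonneg _ hdeg
    apply div_nonneg (by linarith) hN.le
  -- shift lemma
  have hshift : ∀ K ∈ S 2, (K - c) ∈ S N := by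
    intro K hK f
    have h1 := hK f
    have h2 := key_cs Adj ω m x hm hω f
    have h3 := ggamma_nonneg Adj ω m x hm hω f
    have hN' : (0:ℝ) < N⁻¹ := by positivity
    have hcoef : 0 ≤ N⁻¹ - 2⁻¹ := by
      have : N⁻¹ ≥ 2⁻¹ := by
        apply one_div_le_one_div_of_le hN hN2 |>.trans_eq (by simp) |>.trans_eq' (by simp)
      linarith
    have hkey : (N⁻¹ - 2⁻¹) * (glap Adj ω m f x)^2 ≤ (N⁻¹ - 2⁻¹) * (2 * gdeg Adj ω m x * ggamma Adj ω m f f x) :=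
      mul_le_mul_of_nonneg_left h2 hcoef
    have hceq : c = (N⁻¹ - 2⁻¹) * (2 * gdeg Adj ω m x) := by
      rw [hc]; field_simp
    have : c * ggamma Adj ω m f f x = (N⁻¹ - 2⁻¹) * (2 * gdeg Adj ω m x * ggamma Adj ω m f f x) := by
      rw [hceq]; ring
    nlinarith
  -- S N ⊆ S 2
  have hsub : S N ⊆ S 2 := by
    intro K hK f
    have h1 := hK f
    have hcoef : (2:ℝ)⁻¹ ≤ N⁻¹ := by
      apply inv_anti₀ hN hN2
    have hsq := sq_nonneg (glap Adj ω m f x)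
    nlinarith
  by_cases hne : (S 2).Nonempty
  · by_cases hbd : BddAbove (S 2)
    · have hbdN : BddAbove (S N) := hbd.mono hsub
      have hneN : (S N).Nonempty := by
        obtain ⟨K, hK⟩ := hne
        exact ⟨K - c, hshift K hK⟩
      have : sSup (S 2) ≤ sSup (S N) + c := by
        apply csSup_le hne
        intro K hK
        have := le_csSup hbdN (hshift K hK)
        linarith
      linarith
    · have hbdN : ¬ BddAbove (S N) := by
        intro h
        apply hbd
        obtain ⟨B, hB⟩ := h
        refine ⟨B + c, fun K hK => ?_⟩
        have := hB (hshift K hK)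
        linarith
      rw [Real.sSup_of_not_bddAbove hbd, Real.sSup_of_not_bddAbove hbdN]; linarith
  · have hneN : ¬ (S N).Nonempty := fun ⟨K, hK⟩ => hne ⟨K, hsub hK⟩
    rw [Set.not_nonempty_iff_eq_empty] at hne hneN
    rw [hne, hneN, Real.sSup_empty]; linarith
end

section
/- Suppose the weighted graph G₁ satisfies CD(K₁, N₁) at x and G₂ satisfies CD(K₂, N₂) at p. Let α, β be positive constants (constant warping functions) and consider the doubly warped product G₁ _α⋄_β G₂. Then for functions of the form U = c₁f₁ ⊕ c₂f₂ with f₁: G₁→ℝ, f₂: G₂→ℝ, and (c₁, c₂) chosen so that (N₂/(N₁N))c₁²A² + (N₁/(N₂N))c₂²B² − (2/N)c₁c₂AB = 0 where A = α⁻²Δ^{G₁}f₁(x), B = β⁻²Δ^{G₂}f₂(p), N = N₁+N₂, one has Γ₂(U)(x,p) ≥ N⁻¹(ΔU(x,p))² + min(α⁻²K₁, β⁻²K₂)·Γ(U)(x,p). -/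
open Finset

section helpers

variable {V₁ V₂ : Type*} [Fintype V₁] [Fintype V₂] [DecidableEq V₁] [DecidableEq V₂]
variable (A1 : V₁ → V₁ → Prop) [DecidableRel A1] (A2 : V₂ → V₂ → Prop) [DecidableRel A2]
variable (ω1 : V₁ → V₁ → ℝ) (m1 : V₁ → ℝ) (ω2 : V₂ → V₂ → ℝ) (m2 : V₂ → ℝ)

lemma psum (hloop1 : ∀ y, ¬ A1 y y) (hloop2 : ∀ q, ¬ A2 q q)
    (α β : ℝ) (x : V₁) (p : V₂) (F : V₁ × V₂ → ℝ) :
    ∑ w ∈ Finset.univ.filter (fun w => pAdj A1 A2 (x,p) w),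
        F w * pW m1 m2 ω1 ω2 (fun _ _ => α) (fun _ _ => β) (x,p) w
    = m2 p * (α^2)⁻¹ * ∑ y ∈ Finset.univ.filter (fun y => A1 x y), F (y,p) * ω1 x y
    + m1 x * (β^2)⁻¹ * ∑ q ∈ Finset.univ.filter (fun q => A2 p q), F (x,q) * ω2 p q := by
  rw [Finset.sum_filter, Fintype.sum_prod_type]
  have key : ∀ y q, (if pAdj A1 A2 (x,p) (y,q) then
        F (y,q) * pW m1 m2 ω1 ω2 (fun _ _ => α) (fun _ _ => β) (x,p) (y,q) else 0)
      = (if q = p then (if A1 x y then F (y,p) * ω1 x y * (m2 p * (α^2)⁻¹) else 0) else 0)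
      + (if y = x then (if A2 p q then F (x,q) * ω2 p q * (m1 x * (β^2)⁻¹) else 0) else 0) := by
    intro y q
    by_cases hq : q = p
    · subst hq
      by_cases hy : y = x
      · subst hy
        simp [pAdj, pW, hloop1, hloop2]
      · by_cases ha : A1 x y
        · have : pAdj A1 A2 (x,q) (y,q) := Or.inr ⟨rfl, ha⟩
          simp [pW, this, ha, hy, Ne.symm hy]
          ring
        · have : ¬ pAdj A1 A2 (x,q) (y,q) := by
            intro h; rcases h with ⟨h1, h2⟩ | ⟨h1, h2⟩
            · exact hy h1.symm
            · exact ha h2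
          simp [this, ha, hy]
    · by_cases hy : y = x
      · subst hy
        by_cases ha : A2 p q
        · have : pAdj A1 A2 (y,p) (y,q) := Or.inl ⟨rfl, ha⟩
          simp [pW, this, ha, hq, Ne.symm hq]
          ring
        · have : ¬ pAdj A1 A2 (y,p) (y,q) := by
            intro h; rcases h with ⟨h1, h2⟩ | ⟨h1, h2⟩
            · exact ha h2
            · exact hq h1.symm
          simp [this, ha, hq]
      · have : ¬ pAdj A1 A2 (x,p) (y,q) := by
          intro h; rcases h with ⟨h1, h2⟩ | ⟨h1, h2⟩
          · exact hy h1.symm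
          · exact hq h1.symm
        simp [this, hq, hy]
  simp only [key, Finset.sum_add_distrib]
  congr 1
  · simp only [Finset.sum_ite_eq', Finset.mem_univ, if_true]
    rw [Finset.mul_sum, Finset.sum_filter]
    apply Finset.sum_congr rfl; intro y _
    by_cases ha : A1 x y <;> simp [ha] <;> ring
  · rw [Finset.sum_comm]
    simp only [Finset.sum_ite_eq', Finset.mem_univ, if_true]
    rw [Finset.mul_sum, Finset.sum_filter]
    apply Finset.sum_congr rfl; intro q _
    by_cases ha : A2 p q <;> simp [ha] <;> ring

lemma glap_const_mul {V : Type*} [Fintype V] (Adj : V → V → Prop) [DecidableRel Adj]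
    (ω : V → V → ℝ) (m : V → ℝ) (c : ℝ) (f : V → ℝ) (z : V) :
    glap Adj ω m (fun w => c * f w) z = c * glap Adj ω m f z := by
  unfold glap
  have h : ∑ w ∈ Finset.univ.filter (fun w => Adj z w), (c * f w - c * f z) * ω z w
      = c * ∑ w ∈ Finset.univ.filter (fun w => Adj z w), (f w - f z) * ω z w := by
    rw [Finset.mul_sum]; exact Finset.sum_congr rfl fun w _ => by ring
  rw [h]; ring

lemma ggamma_const_mul_right {V : Type*} [Fintype V] (Adj : V → V → Prop) [DecidableRel Adj]
    (ω : V → V → ℝ) (m : V → ℝ) (c : ℝ) (f g : V → ℝ) (z : V) :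
    ggamma Adj ω m f (fun w => c * g w) z = c * ggamma Adj ω m f g z := by
  unfold ggamma
  have h : ∑ w ∈ Finset.univ.filter (fun w => Adj z w), (f w - f z) * (c * g w - c * g z) * ω z w
      = c * ∑ w ∈ Finset.univ.filter (fun w => Adj z w), (f w - f z) * (g w - g z) * ω z w := by
    rw [Finset.mul_sum]; exact Finset.sum_congr rfl fun w _ => by ring
  rw [h]; ring

lemma ggamma_nonneg_s16 {V : Type*} [Fintype V] (Adj : V → V → Prop) [DecidableRel Adj]
    (ω : V → V → ℝ) (m : V → ℝ) (f : V → ℝ) (z : V)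
    (hm : 0 < m z) (hω : ∀ w, Adj z w → 0 < ω z w) :
    0 ≤ ggamma Adj ω m f f z := by
  unfold ggamma
  apply mul_nonneg
  · positivity
  · apply Finset.sum_nonneg
    intro w hw
    rw [Finset.mem_filter] at hw
    have := hω w hw.2
    nlinarith [sq_nonneg (f w - f z)]

lemma plap (hm1 : ∀ y, 0 < m1 y) (hm2 : ∀ q, 0 < m2 q)
    (hloop1 : ∀ y, ¬ A1 y y) (hloop2 : ∀ q, ¬ A2 q q)
    (α β : ℝ) (x : V₁) (p : V₂) (g1 : V₁ → ℝ) (g2 : V₂ → ℝ) :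
    glap (pAdj A1 A2) (pW m1 m2 ω1 ω2 (fun _ _ => α) (fun _ _ => β)) (pM m1 m2)
        (fun z => g1 z.1 + g2 z.2) (x, p)
    = (α^2)⁻¹ * glap A1 ω1 m1 g1 x + (β^2)⁻¹ * glap A2 ω2 m2 g2 p := by
  unfold glap pM
  rw [psum A1 A2 ω1 m1 ω2 m2 hloop1 hloop2 α β x p
    (fun w => (g1 w.1 + g2 w.2) - (g1 x + g2 p))]
  have hx : (m1 x) ≠ 0 := (hm1 x).ne'
  have hp : (m2 p) ≠ 0 := (hm2 p).ne'
  simp only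
  have e1 : ∀ y : V₁, g1 y + g2 p - (g1 x + g2 p) = g1 y - g1 x := by intro y; ring
  have e2 : ∀ q : V₂, g1 x + g2 q - (g1 x + g2 p) = g2 q - g2 p := by intro q; ring
  simp only [e1, e2]
  have alg : ∀ S1 S2 : ℝ, (m1 x * m2 p)⁻¹ * (m2 p * (α^2)⁻¹ * S1 + m1 x * (β^2)⁻¹ * S2)
      = (α^2)⁻¹ * ((m1 x)⁻¹ * S1) + (β^2)⁻¹ * ((m2 p)⁻¹ * S2) := by
    intro S1 S2
    simp only [mul_inv]
    linear_combination ((α^2)⁻¹ * (m1 x)⁻¹ * S1) * inv_mul_cancel₀ hp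
      + ((β^2)⁻¹ * (m2 p)⁻¹ * S2) * inv_mul_cancel₀ hx
  exact alg _ _

lemma pgamma (hm1 : ∀ y, 0 < m1 y) (hm2 : ∀ q, 0 < m2 q)
    (hloop1 : ∀ y, ¬ A1 y y) (hloop2 : ∀ q, ¬ A2 q q)
    (α β : ℝ) (x : V₁) (p : V₂) (g1 h1 : V₁ → ℝ) (g2 h2 : V₂ → ℝ) :
    ggamma (pAdj A1 A2) (pW m1 m2 ω1 ω2 (fun _ _ => α) (fun _ _ => β)) (pM m1 m2)
        (fun z => g1 z.1 + g2 z.2) (fun z => h1 z.1 + h2 z.2) (x, p)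
    = (α^2)⁻¹ * ggamma A1 ω1 m1 g1 h1 x + (β^2)⁻¹ * ggamma A2 ω2 m2 g2 h2 p := by
  unfold ggamma pM
  rw [psum A1 A2 ω1 m1 ω2 m2 hloop1 hloop2 α β x p
    (fun w => ((g1 w.1 + g2 w.2) - (g1 x + g2 p)) * ((h1 w.1 + h2 w.2) - (h1 x + h2 p)))]
  have hx : (m1 x) ≠ 0 := (hm1 x).ne'
  have hp : (m2 p) ≠ 0 := (hm2 p).ne'
  simp only
  have e1 : ∀ y : V₁, (g1 y + g2 p - (g1 x + g2 p)) * (h1 y + h2 p - (h1 x + h2 p))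
      = (g1 y - g1 x) * (h1 y - h1 x) := by intro y; ring
  have e2 : ∀ q : V₂, (g1 x + g2 q - (g1 x + g2 p)) * (h1 x + h2 q - (h1 x + h2 p))
      = (g2 q - g2 p) * (h2 q - h2 p) := by intro q; ring
  simp only [e1, e2]
  have alg : ∀ S1 S2 : ℝ, (2 * (m1 x * m2 p))⁻¹ * (m2 p * (α^2)⁻¹ * S1 + m1 x * (β^2)⁻¹ * S2)
      = (α^2)⁻¹ * ((2 * m1 x)⁻¹ * S1) + (β^2)⁻¹ * ((2 * m2 p)⁻¹ * S2) := by
    intro S1 S2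
    simp only [mul_inv]
    linear_combination ((α^2)⁻¹ * 2⁻¹ * (m1 x)⁻¹ * S1) * inv_mul_cancel₀ hp
      + ((β^2)⁻¹ * 2⁻¹ * (m2 p)⁻¹ * S2) * inv_mul_cancel₀ hx
  exact alg _ _

lemma pgamma2 (hm1 : ∀ y, 0 < m1 y) (hm2 : ∀ q, 0 < m2 q)
    (hloop1 : ∀ y, ¬ A1 y y) (hloop2 : ∀ q, ¬ A2 q q)
    (α β : ℝ) (x : V₁) (p : V₂) (g1 : V₁ → ℝ) (g2 : V₂ → ℝ) :
    ggamma2 (pAdj A1 A2) (pW m1 m2 ω1 ω2 (fun _ _ => α) (fun _ _ => β)) (pM m1 m2)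
        (fun z => g1 z.1 + g2 z.2) (x, p)
    = ((α^2)⁻¹)^2 * ggamma2 A1 ω1 m1 g1 x + ((β^2)⁻¹)^2 * ggamma2 A2 ω2 m2 g2 p := by
  unfold ggamma2
  have hG : (fun w => ggamma (pAdj A1 A2) (pW m1 m2 ω1 ω2 (fun _ _ => α) (fun _ _ => β))
        (pM m1 m2) (fun z => g1 z.1 + g2 z.2) (fun z => g1 z.1 + g2 z.2) w)
      = fun w : V₁ × V₂ => ((α^2)⁻¹ * ggamma A1 ω1 m1 g1 g1 w.1)
        + ((β^2)⁻¹ * ggamma A2 ω2 m2 g2 g2 w.2) := by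
    funext w
    exact pgamma A1 A2 ω1 m1 ω2 m2 hm1 hm2 hloop1 hloop2 α β w.1 w.2 g1 g1 g2 g2
  have hL : (glap (pAdj A1 A2) (pW m1 m2 ω1 ω2 (fun _ _ => α) (fun _ _ => β))
        (pM m1 m2) (fun z => g1 z.1 + g2 z.2))
      = fun w : V₁ × V₂ => ((α^2)⁻¹ * glap A1 ω1 m1 g1 w.1)
        + ((β^2)⁻¹ * glap A2 ω2 m2 g2 w.2) := by
    funext w
    exact plap A1 A2 ω1 m1 ω2 m2 hm1 hm2 hloop1 hloop2 α β w.1 w.2 g1 g2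
  rw [hG, hL]
  rw [plap A1 A2 ω1 m1 ω2 m2 hm1 hm2 hloop1 hloop2 α β x p
    (fun y => (α^2)⁻¹ * ggamma A1 ω1 m1 g1 g1 y) (fun q => (β^2)⁻¹ * ggamma A2 ω2 m2 g2 g2 q)]
  rw [pgamma A1 A2 ω1 m1 ω2 m2 hm1 hm2 hloop1 hloop2 α β x p
    g1 (fun y => (α^2)⁻¹ * glap A1 ω1 m1 g1 y) g2 (fun q => (β^2)⁻¹ * glap A2 ω2 m2 g2 q)]
  rw [glap_const_mul, glap_const_mul, ggamma_const_mul_right, ggamma_const_mul_right]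
  ring
end helpers

lemma assemble (N1 N2 K1 K2 a2 b2 L1 L2 G1 G2 T1 T2 : ℝ)
    (hN1 : 0 < N1) (hN2 : 0 < N2) (ha2 : 0 ≤ a2) (hb2 : 0 ≤ b2)
    (hG1 : 0 ≤ G1) (hG2 : 0 ≤ G2)
    (hT1 : T1 ≥ N1⁻¹ * L1^2 + K1 * G1) (hT2 : T2 ≥ N2⁻¹ * L2^2 + K2 * G2)
    (hz : N2 / (N1 * (N1 + N2)) * (a2 * L1)^2 + N1 / (N2 * (N1 + N2)) * (b2 * L2)^2
      - 2 / (N1 + N2) * (a2 * L1) * (b2 * L2) = 0) :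
    a2^2 * T1 + b2^2 * T2 ≥ (N1 + N2)⁻¹ * (a2 * L1 + b2 * L2)^2
      + min (a2 * K1) (b2 * K2) * (a2 * G1 + b2 * G2) := by
  have hN : (0:ℝ) < N1 + N2 := by linarith
  have key : (N1 + N2)⁻¹ * (a2 * L1 + b2 * L2)^2
      = N1⁻¹ * (a2 * L1)^2 + N2⁻¹ * (b2 * L2)^2
        - (N2 / (N1 * (N1 + N2)) * (a2 * L1)^2 + N1 / (N2 * (N1 + N2)) * (b2 * L2)^2
          - 2 / (N1 + N2) * (a2 * L1) * (b2 * L2)) := by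
    field_simp
    ring
  rw [hz, sub_zero] at key
  have hX1 : (0:ℝ) ≤ a2 * G1 := mul_nonneg ha2 hG1
  have hX2 : (0:ℝ) ≤ b2 * G2 := mul_nonneg hb2 hG2
  have hmin : min (a2 * K1) (b2 * K2) * (a2 * G1 + b2 * G2)
      ≤ (a2 * K1) * (a2 * G1) + (b2 * K2) * (b2 * G2) := by
    rw [mul_add]
    exact add_le_add (mul_le_mul_of_nonneg_right (min_le_left _ _) hX1)
      (mul_le_mul_of_nonneg_right (min_le_right _ _) hX2)
  have h1' : a2^2 * T1 ≥ a2^2 * (N1⁻¹ * L1^2 + K1 * G1) :=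
    mul_le_mul_of_nonneg_left hT1 (by positivity)
  have h2' : b2^2 * T2 ≥ b2^2 * (N2⁻¹ * L2^2 + K2 * G2) :=
    mul_le_mul_of_nonneg_left hT2 (by positivity)
  have expand : a2^2 * (N1⁻¹ * L1^2 + K1 * G1) + b2^2 * (N2⁻¹ * L2^2 + K2 * G2)
      = (N1⁻¹ * (a2 * L1)^2 + N2⁻¹ * (b2 * L2)^2)
        + ((a2 * K1) * (a2 * G1) + (b2 * K2) * (b2 * G2)) := by ring
  linarith [h1', h2', hmin, key, expand]

theorem stmt16 {V₁ V₂ : Type*} [Fintype V₁] [Fintype V₂] [DecidableEq V₁] [DecidableEq V₂]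
    (A1 : V₁ → V₁ → Prop) [DecidableRel A1] (A2 : V₂ → V₂ → Prop) [DecidableRel A2]
    (ω1 : V₁ → V₁ → ℝ) (m1 : V₁ → ℝ) (ω2 : V₂ → V₂ → ℝ) (m2 : V₂ → ℝ)
    (hloop1 : ∀ y, ¬ A1 y y) (hloop2 : ∀ q, ¬ A2 q q)
    (hsym1 : ∀ y z, A1 y z → A1 z y) (hsym2 : ∀ q r, A2 q r → A2 r q)
    (hm1 : ∀ y, 0 < m1 y) (hm2 : ∀ q, 0 < m2 q)
    (hω1 : ∀ y z, A1 y z → 0 < ω1 y z) (hω2 : ∀ q r, A2 q r → 0 < ω2 q r)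
    (α β : ℝ) (hα : 0 < α) (hβ : 0 < β)
    (N1 N2 K1 K2 : ℝ) (hN1 : 0 < N1) (hN2 : 0 < N2)
    (x : V₁) (p : V₂) (f1 : V₁ → ℝ) (f2 : V₂ → ℝ) (c1 c2 : ℝ)
    (hcd1 : ∀ f : V₁ → ℝ, ggamma2 A1 ω1 m1 f x
      ≥ N1⁻¹ * (glap A1 ω1 m1 f x)^2 + K1 * ggamma A1 ω1 m1 f f x)
    (hcd2 : ∀ f : V₂ → ℝ, ggamma2 A2 ω2 m2 f p
      ≥ N2⁻¹ * (glap A2 ω2 m2 f p)^2 + K2 * ggamma A2 ω2 m2 f f p)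
    (hzero : (N2 / (N1 * (N1 + N2))) * c1^2 * ((α^2)⁻¹ * glap A1 ω1 m1 f1 x)^2
      + (N1 / (N2 * (N1 + N2))) * c2^2 * ((β^2)⁻¹ * glap A2 ω2 m2 f2 p)^2
      - (2 / (N1 + N2)) * c1 * c2 * ((α^2)⁻¹ * glap A1 ω1 m1 f1 x)
          * ((β^2)⁻¹ * glap A2 ω2 m2 f2 p) = 0) :
    ggamma2 (pAdj A1 A2) (pW m1 m2 ω1 ω2 (fun _ _ => α) (fun _ _ => β)) (pM m1 m2)
        (fun z => c1 * f1 z.1 + c2 * f2 z.2) (x, p)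
      ≥ (N1 + N2)⁻¹ * (glap (pAdj A1 A2) (pW m1 m2 ω1 ω2 (fun _ _ => α) (fun _ _ => β))
            (pM m1 m2) (fun z => c1 * f1 z.1 + c2 * f2 z.2) (x, p))^2
        + min ((α^2)⁻¹ * K1) ((β^2)⁻¹ * K2)
            * ggamma (pAdj A1 A2) (pW m1 m2 ω1 ω2 (fun _ _ => α) (fun _ _ => β)) (pM m1 m2)
                (fun z => c1 * f1 z.1 + c2 * f2 z.2)
                (fun z => c1 * f1 z.1 + c2 * f2 z.2) (x, p) := by
  rw [pgamma2 A1 A2 ω1 m1 ω2 m2 hm1 hm2 hloop1 hloop2 α β x p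
      (fun y => c1 * f1 y) (fun q => c2 * f2 q),
    plap A1 A2 ω1 m1 ω2 m2 hm1 hm2 hloop1 hloop2 α β x p
      (fun y => c1 * f1 y) (fun q => c2 * f2 q),
    pgamma A1 A2 ω1 m1 ω2 m2 hm1 hm2 hloop1 hloop2 α β x p
      (fun y => c1 * f1 y) (fun y => c1 * f1 y) (fun q => c2 * f2 q) (fun q => c2 * f2 q)]
  have e1 : glap A1 ω1 m1 (fun y => c1 * f1 y) x = c1 * glap A1 ω1 m1 f1 x :=
    glap_const_mul A1 ω1 m1 c1 f1 x
  have e2 : glap A2 ω2 m2 (fun q => c2 * f2 q) p = c2 * glap A2 ω2 m2 f2 p :=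
    glap_const_mul A2 ω2 m2 c2 f2 p
  refine assemble N1 N2 K1 K2 ((α^2)⁻¹) ((β^2)⁻¹)
    (glap A1 ω1 m1 (fun y => c1 * f1 y) x) (glap A2 ω2 m2 (fun q => c2 * f2 q) p)
    (ggamma A1 ω1 m1 (fun y => c1 * f1 y) (fun y => c1 * f1 y) x)
    (ggamma A2 ω2 m2 (fun q => c2 * f2 q) (fun q => c2 * f2 q) p)
    _ _ hN1 hN2 (by positivity) (by positivity)
    (ggamma_nonneg_s16 A1 ω1 m1 _ x (hm1 x) (hω1 x))
    (ggamma_nonneg_s16 A2 ω2 m2 _ p (hm2 p) (hω2 p))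
    (hcd1 _) (hcd2 _) ?_
  rw [e1, e2]
  linear_combination hzero
end

section
/- In the doubly warped product graph G₁ _α⋄_β G₂ (with α: G₂ → ℝ_+, β: G₁ → ℝ_+), for a function u₁ on G₁ lifted to the product via (u₁⊗1)(x,p) = u₁(x), the iterated square field operator satisfies Γ₂(u₁⊗1)(x,p) = α⁻⁴(p)·Γ₂^{G₁}(u₁)(x) + (1/2)·β⁻²(x)·Γ^{G₁}(u₁)(x)·Δ^{G₂}(α⁻²)(p). -/
open Finset

section Aux

variable {V : Type*} [Fintype V] (Adj : V → V → Prop) [DecidableRel Adj]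
    (ω : V → V → ℝ) (m : V → ℝ)

lemma glap_smul (c : ℝ) (g : V → ℝ) (z : V) :
    glap Adj ω m (fun w => c * g w) z = c * glap Adj ω m g z := by
  unfold glap
  have h : ∑ w ∈ Finset.univ.filter (fun w => Adj z w), (c * g w - c * g z) * ω z w
      = c * ∑ w ∈ Finset.univ.filter (fun w => Adj z w), (g w - g z) * ω z w := by
    rw [Finset.mul_sum]
    exact Finset.sum_congr rfl fun w _ => by ring
  rw [h]
  ring

lemma ggamma_smul_right (c : ℝ) (f g : V → ℝ) (z : V) :
    ggamma Adj ω m f (fun w => c * g w) z = c * ggamma Adj ω m f g z := by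
  unfold ggamma
  have h : ∑ w ∈ Finset.univ.filter (fun w => Adj z w),
        (f w - f z) * (c * g w - c * g z) * ω z w
      = c * ∑ w ∈ Finset.univ.filter (fun w => Adj z w), (f w - f z) * (g w - g z) * ω z w := by
    rw [Finset.mul_sum]
    exact Finset.sum_congr rfl fun w _ => by ring
  rw [h]
  ring

lemma ggamma_const_left (c : ℝ) (g : V → ℝ) (z : V) :
    ggamma Adj ω m (fun _ => c) g z = 0 := by
  unfold ggamma
  simp

end Aux

section Prod

variable {V₁ V₂ : Type*} [Fintype V₁] [Fintype V₂] [DecidableEq V₁] [DecidableEq V₂]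
    (A1 : V₁ → V₁ → Prop) [DecidableRel A1] (A2 : V₂ → V₂ → Prop) [DecidableRel A2]
    (ω1 : V₁ → V₁ → ℝ) (m1 : V₁ → ℝ) (ω2 : V₂ → V₂ → ℝ) (m2 : V₂ → ℝ)
    (α : V₂ → ℝ) (β : V₁ → ℝ)

lemma sum_pAdj (hloop1 : ∀ y, ¬ A1 y y) (hloop2 : ∀ q, ¬ A2 q q)
    (x : V₁) (p : V₂) (F : V₁ × V₂ → ℝ) :
    ∑ w ∈ Finset.univ.filter (fun w => pAdj A1 A2 (x, p) w), F w
      = (∑ y ∈ Finset.univ.filter (fun y => A1 x y), F (y, p))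
        + ∑ q ∈ Finset.univ.filter (fun q => A2 p q), F (x, q) := by
  rw [Finset.sum_filter, Finset.sum_filter, Finset.sum_filter, Fintype.sum_prod_type]
  have key : ∀ y : V₁, (∑ q : V₂, if pAdj A1 A2 (x, p) (y, q) then F (y, q) else 0)
      = (if A1 x y then F (y, p) else 0)
        + (if y = x then ∑ q : V₂, (if A2 p q then F (x, q) else 0) else 0) := by
    intro y
    by_cases hxy : y = x
    · subst hxy
      simp [pAdj, hloop1 y, hloop2]
    · have hxy' : ¬ (x = y) := fun h => hxy h.symm
      have : ∀ q : V₂, (if pAdj A1 A2 (x, p) (y, q) then F (y, q) else 0)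
          = if p = q ∧ A1 x y then F (y, q) else 0 := by
        intro q
        simp [pAdj, hxy']
      simp only [this]
      by_cases hA : A1 x y
      · simp [hA, hxy]
      · simp [hA, hxy]
  simp only [key]
  rw [Finset.sum_add_distrib]
  congr 1
  simp

lemma pglap (hloop1 : ∀ y, ¬ A1 y y) (hloop2 : ∀ q, ¬ A2 q q)
    (hm1 : ∀ y, 0 < m1 y) (hm2 : ∀ q, 0 < m2 q)
    (f : V₁ × V₂ → ℝ) (x : V₁) (p : V₂) :
    glap (pAdj A1 A2) (pW m1 m2 ω1 ω2 (fun _ q => α q) (fun y _ => β y)) (pM m1 m2) f (x, p)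
      = (α p ^ 2)⁻¹ * glap A1 ω1 m1 (fun y => f (y, p)) x
        + (β x ^ 2)⁻¹ * glap A2 ω2 m2 (fun q => f (x, q)) p := by
  have hm1' : m1 x ≠ 0 := (hm1 x).ne'
  have hm2' : m2 p ≠ 0 := (hm2 p).ne'
  unfold glap pM
  beta_reduce
  rw [sum_pAdj A1 A2 hloop1 hloop2]
  have e1 : ∑ y ∈ Finset.univ.filter (fun y => A1 x y),
      (f (y, p) - f (x, p)) * pW m1 m2 ω1 ω2 (fun _ q => α q) (fun y _ => β y) (x, p) (y, p)
      = m2 p * (α p ^ 2)⁻¹ * ∑ y ∈ Finset.univ.filter (fun y => A1 x y),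
          (f (y, p) - f (x, p)) * ω1 x y := by
    rw [Finset.mul_sum]
    apply Finset.sum_congr rfl
    intro y hy
    simp only [Finset.mem_filter] at hy
    have hxy : ¬ (x = y) := fun h => hloop1 x (h ▸ hy.2)
    simp only [pW, hxy]
    simp
    ring
  have e2 : ∑ q ∈ Finset.univ.filter (fun q => A2 p q),
      (f (x, q) - f (x, p)) * pW m1 m2 ω1 ω2 (fun _ q => α q) (fun y _ => β y) (x, p) (x, q)
      = m1 x * (β x ^ 2)⁻¹ * ∑ q ∈ Finset.univ.filter (fun q => A2 p q),
          (f (x, q) - f (x, p)) * ω2 p q := by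
    rw [Finset.mul_sum]
    apply Finset.sum_congr rfl
    intro q hq
    simp only [Finset.mem_filter] at hq
    have hpq : ¬ (p = q) := fun h => hloop2 p (h ▸ hq.2)
    simp only [pW, hpq]
    simp
    ring
  have key : ∀ (a b c d S T : ℝ), a ≠ 0 → b ≠ 0 →
      (a * b)⁻¹ * (b * c * S + a * d * T) = c * (a⁻¹ * S) + d * (b⁻¹ * T) := by
    intro a b c d S T ha hb
    field_simp
  rw [e1, e2]
  exact key _ _ _ _ _ _ hm1' hm2'

lemma pggamma (hloop1 : ∀ y, ¬ A1 y y) (hloop2 : ∀ q, ¬ A2 q q)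
    (hm1 : ∀ y, 0 < m1 y) (hm2 : ∀ q, 0 < m2 q)
    (f g : V₁ × V₂ → ℝ) (x : V₁) (p : V₂) :
    ggamma (pAdj A1 A2) (pW m1 m2 ω1 ω2 (fun _ q => α q) (fun y _ => β y)) (pM m1 m2) f g (x, p)
      = (α p ^ 2)⁻¹ * ggamma A1 ω1 m1 (fun y => f (y, p)) (fun y => g (y, p)) x
        + (β x ^ 2)⁻¹ * ggamma A2 ω2 m2 (fun q => f (x, q)) (fun q => g (x, q)) p := by
  have hm1' : m1 x ≠ 0 := (hm1 x).ne'
  have hm2' : m2 p ≠ 0 := (hm2 p).ne'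
  unfold ggamma pM
  beta_reduce
  rw [sum_pAdj A1 A2 hloop1 hloop2]
  have e1 : ∑ y ∈ Finset.univ.filter (fun y => A1 x y),
      (f (y, p) - f (x, p)) * (g (y, p) - g (x, p)) *
        pW m1 m2 ω1 ω2 (fun _ q => α q) (fun y _ => β y) (x, p) (y, p)
      = m2 p * (α p ^ 2)⁻¹ * ∑ y ∈ Finset.univ.filter (fun y => A1 x y),
          (f (y, p) - f (x, p)) * (g (y, p) - g (x, p)) * ω1 x y := by
    rw [Finset.mul_sum]
    apply Finset.sum_congr rfl
    intro y hy
    simp only [Finset.mem_filter] at hy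
    have hxy : ¬ (x = y) := fun h => hloop1 x (h ▸ hy.2)
    simp only [pW, hxy]
    simp
    ring
  have e2 : ∑ q ∈ Finset.univ.filter (fun q => A2 p q),
      (f (x, q) - f (x, p)) * (g (x, q) - g (x, p)) *
        pW m1 m2 ω1 ω2 (fun _ q => α q) (fun y _ => β y) (x, p) (x, q)
      = m1 x * (β x ^ 2)⁻¹ * ∑ q ∈ Finset.univ.filter (fun q => A2 p q),
          (f (x, q) - f (x, p)) * (g (x, q) - g (x, p)) * ω2 p q := by
    rw [Finset.mul_sum]
    apply Finset.sum_congr rfl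
    intro q hq
    simp only [Finset.mem_filter] at hq
    have hpq : ¬ (p = q) := fun h => hloop2 p (h ▸ hq.2)
    simp only [pW, hpq]
    simp
    ring
  have key : ∀ (a b c d S T : ℝ), a ≠ 0 → b ≠ 0 →
      (2 * (a * b))⁻¹ * (b * c * S + a * d * T)
        = c * ((2 * a)⁻¹ * S) + d * ((2 * b)⁻¹ * T) := by
    intro a b c d S T ha hb
    field_simp
  rw [e1, e2]
  exact key _ _ _ _ _ _ hm1' hm2'

end Prod


lemma glap_const {V : Type*} [Fintype V] (Adj : V → V → Prop) [DecidableRel Adj]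
    (ω : V → V → ℝ) (m : V → ℝ) (c : ℝ) (z : V) :
    glap Adj ω m (fun _ => c) z = 0 := by
  unfold glap; simp

theorem stmt17 {V₁ V₂ : Type*} [Fintype V₁] [Fintype V₂] [DecidableEq V₁] [DecidableEq V₂]
    (A1 : V₁ → V₁ → Prop) [DecidableRel A1] (A2 : V₂ → V₂ → Prop) [DecidableRel A2]
    (ω1 : V₁ → V₁ → ℝ) (m1 : V₁ → ℝ) (ω2 : V₂ → V₂ → ℝ) (m2 : V₂ → ℝ)
    (α : V₂ → ℝ) (β : V₁ → ℝ)
    (hloop1 : ∀ y, ¬ A1 y y) (hloop2 : ∀ q, ¬ A2 q q)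
    (hsym1 : ∀ y z, A1 y z → A1 z y) (hsym2 : ∀ q r, A2 q r → A2 r q)
    (hm1 : ∀ y, 0 < m1 y) (hm2 : ∀ q, 0 < m2 q)
    (hα : ∀ q, 0 < α q) (hβ : ∀ y, 0 < β y)
    (u1 : V₁ → ℝ) (x : V₁) (p : V₂) :
    ggamma2 (pAdj A1 A2) (pW m1 m2 ω1 ω2 (fun _ q => α q) (fun y _ => β y)) (pM m1 m2)
        (fun z => u1 z.1) (x, p)
      = (α p ^ 4)⁻¹ * ggamma2 A1 ω1 m1 u1 x
        + (1/2) * (β x ^ 2)⁻¹ * ggamma A1 ω1 m1 u1 u1 x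
            * glap A2 ω2 m2 (fun q => (α q ^ 2)⁻¹) p := by
  set u : V₁ × V₂ → ℝ := fun z => u1 z.1 with hu
  set W := pW m1 m2 ω1 ω2 (fun _ q => α q) (fun y _ => β y) with hW
  set M := pM m1 m2 with hM
  have hLap : ∀ (y : V₁) (q : V₂), glap (pAdj A1 A2) W M u (y, q)
      = (α q ^ 2)⁻¹ * glap A1 ω1 m1 u1 y := by
    intro y q
    rw [hW, hM, pglap A1 A2 ω1 m1 ω2 m2 α β hloop1 hloop2 hm1 hm2]
    have h1 : (fun y' => u (y', q)) = u1 := rfl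
    have h2 : (fun r => u (y, r)) = fun _ => u1 y := rfl
    rw [h1, h2, glap_const]
    ring
  have hGam : ∀ (y : V₁) (q : V₂), ggamma (pAdj A1 A2) W M u u (y, q)
      = (α q ^ 2)⁻¹ * ggamma A1 ω1 m1 u1 u1 y := by
    intro y q
    rw [hW, hM, pggamma A1 A2 ω1 m1 ω2 m2 α β hloop1 hloop2 hm1 hm2]
    have h2 : (fun r => u (y, r)) = fun _ => u1 y := rfl
    rw [h2, ggamma_const_left]
    ring
  have hα4 : (α p ^ 2)⁻¹ * (α p ^ 2)⁻¹ = (α p ^ 4)⁻¹ := by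
    rw [← mul_inv, ← pow_add]
  unfold ggamma2
  have hA : glap (pAdj A1 A2) W M
      (fun w => ggamma (pAdj A1 A2) W M u u w) (x, p)
      = (α p ^ 2)⁻¹ * ((α p ^ 2)⁻¹ *
          glap A1 ω1 m1 (fun y => ggamma A1 ω1 m1 u1 u1 y) x)
        + (β x ^ 2)⁻¹ * (ggamma A1 ω1 m1 u1 u1 x *
            glap A2 ω2 m2 (fun q => (α q ^ 2)⁻¹) p) := by
    rw [hW, hM, pglap A1 A2 ω1 m1 ω2 m2 α β hloop1 hloop2 hm1 hm2]
    have h1 : (fun y => ggamma (pAdj A1 A2) W M u u (y, p))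
        = fun y => (α p ^ 2)⁻¹ * ggamma A1 ω1 m1 u1 u1 y := funext fun y => hGam y p
    have h2 : (fun q => ggamma (pAdj A1 A2) W M u u (x, q))
        = fun q => ggamma A1 ω1 m1 u1 u1 x * (α q ^ 2)⁻¹ := by
      funext q; rw [hGam x q]; ring
    rw [h1, h2, glap_smul]
    have h3 : (fun q => ggamma A1 ω1 m1 u1 u1 x * (α q ^ 2)⁻¹)
        = fun q => ggamma A1 ω1 m1 u1 u1 x * (fun r => (α r ^ 2)⁻¹) q := rfl
    rw [h3, glap_smul]
  have hB : ggamma (pAdj A1 A2) W M u (glap (pAdj A1 A2) W M u) (x, p)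
      = (α p ^ 2)⁻¹ * ((α p ^ 2)⁻¹ * ggamma A1 ω1 m1 u1 (glap A1 ω1 m1 u1) x) := by
    rw [hW, hM, pggamma A1 A2 ω1 m1 ω2 m2 α β hloop1 hloop2 hm1 hm2]
    have h1 : (fun y => u (y, p)) = u1 := rfl
    have h2 : (fun q => u (x, q)) = fun _ => u1 x := rfl
    have h3 : (fun y => glap (pAdj A1 A2) W M u (y, p))
        = fun y => (α p ^ 2)⁻¹ * glap A1 ω1 m1 u1 y := funext fun y => hLap y p
    rw [h1, h2, h3, ggamma_const_left, ggamma_smul_right]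
    ring
  rw [hA, hB, ← hα4]
  ring
end
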